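/- Let G be a topological group and S a closed subgroup of finite index. Then the universal minimal proximal flow of S extends to a G-action such that (G, Π(S)) is isomorphic to (G, Π(G)). Consequently (G,Π(G)) is free if and only if (G,Π(S)) is free. -/

import Mathlib

universe u v

def IsMinimalFlow (G X : Type*) [Group G] [TopologicalSpace X] [MulAction G X] : Prop :=
  ∀ x : X, Dense (Set.range fun g : G => g • x)

def IsProximalFlow (G X : Type*) [Group G] [TopologicalSpace X] [MulAction G X] : Prop :=
  ∀ x y : X, ∃ z : X, (z, z) ∈ closure (Set.range fun g : G => (g • x, g • y))

/-!
Restricted to `S`, the flow `Π(G)` stays proximal (the `G`-orbit of a pair is covered by finitely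
many translates of its `S`-orbit) and stays minimal: for the normal core `N` of `S`, the
`G`-translates of a minimal `N`-set are finitely many pairwise disjoint closed sets, and a proximal
pair cannot be spread over two of them. Universality of `Π(S)` gives an `S`-map `Π(S) → Π(G)`.
Conversely, the `G`-flow coinduced from `Π(S)` (the `S`-equivariant maps `G → Π(S)`, with `G`
acting by right translation) is compact, jointly continuous because `S` is open, and proximal
because its finitely many coordinates `φ ↦ φ t` are proximal for `N`; so `Π(G)` maps to it, and
evaluation at `1` gives an `S`-map `Π(G) → Π(S)`. Morphisms from a minimal flow to a proximal one
are unique, so the two maps are inverse homeomorphisms, and transporting the `G`-action of `Π(G)`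
along them extends the `S`-action of `Π(S)`.
-/

open Set MulAction Topology
open scoped Pointwise

instance Subgroup.continuousConstSMul {G X : Type*} [Group G] [TopologicalSpace X] [MulAction G X]
    [ContinuousConstSMul G X] (H : Subgroup G) : ContinuousConstSMul H X :=
  ⟨fun h => continuous_const_smul (h : G)⟩

section Flow

variable {G X Y : Type*} [Group G] [TopologicalSpace X] [MulAction G X]
  [TopologicalSpace Y] [MulAction G Y]

theorem IsMinimalFlow.of_surjective (hX : IsMinimalFlow G X) {f : X → Y} (hf : Continuous f)
    (hsurj : Function.Surjective f) (hfeq : ∀ (g : G) x, f (g • x) = g • f x) :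
    IsMinimalFlow G Y := by
  intro y
  obtain ⟨x, rfl⟩ := hsurj y
  have := hsurj.denseRange.dense_image hf (hX x)
  rw [← range_comp, Function.comp_def] at this
  simpa only [hfeq] using this

theorem IsProximalFlow.of_surjective (hX : IsProximalFlow G X) {f : X → Y} (hf : Continuous f)
    (hsurj : Function.Surjective f) (hfeq : ∀ (g : G) x, f (g • x) = g • f x) :
    IsProximalFlow G Y := by
  intro y y'
  obtain ⟨x, rfl⟩ := hsurj y
  obtain ⟨x', rfl⟩ := hsurj y'
  obtain ⟨z, hz⟩ := hX x x'
  refine ⟨f z, ?_⟩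
  have := image_closure_subset_closure_image (hf.prodMap hf) ⟨_, hz, rfl⟩
  rw [← range_comp, Function.comp_def] at this
  simpa only [Prod.map, hfeq] using this

theorem IsMinimalFlow.of_le {H K : Subgroup G} (hHK : H ≤ K) (h : IsMinimalFlow H X) :
    IsMinimalFlow K X := fun x =>
  Dense.mono (range_subset_iff.2 fun g : H => ⟨⟨g, hHK g.2⟩, rfl⟩) (h x)

theorem IsProximalFlow.of_subgroup {H : Subgroup G} (h : IsProximalFlow H X) :
    IsProximalFlow G X := fun x y =>
  (h x y).imp fun _ hz => closure_mono (range_subset_iff.2 fun g : H => mem_range_self (g : G)) hz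

theorem IsProximalFlow.eq_of_equivariant [CompactSpace X] [T2Space Y]
    (hY : IsProximalFlow G Y) (hX : IsMinimalFlow G X) {f f' : X → Y}
    (hf : Continuous f) (hf' : Continuous f') (hfeq : ∀ (g : G) x, f (g • x) = g • f x)
    (hf'eq : ∀ (g : G) x, f' (g • x) = g • f' x) : f = f' := by
  funext x
  obtain ⟨z, hz⟩ := hY (f x) (f' x)
  have hclosed : IsClosed (range fun x => (f x, f' x)) :=
    (isCompact_range (hf.prodMk hf')).isClosed
  have horbit : (range fun g : G => (g • f x, g • f' x)) ⊆ range fun x => (f x, f' x) :=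
    range_subset_iff.2 fun g => ⟨g • x, by simp only [hfeq, hf'eq]⟩
  obtain ⟨x₁, hx₁⟩ := hclosed.closure_subset_iff.2 horbit hz
  simp only [Prod.mk.injEq] at hx₁
  have hagree : (range fun g : G => g • x₁) ⊆ {x | f x = f' x} :=
    range_subset_iff.2 fun g => show f _ = f' _ by rw [hfeq, hf'eq, hx₁.1, hx₁.2]
  exact (isClosed_eq hf hf').closure_subset_iff.2 hagree ((hX x₁).closure_eq ▸ mem_univ x)

end Flow

section Subflow

variable {G X : Type*} [Group G] [TopologicalSpace X] [MulAction G X]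

variable (G) in
def IsSubflow (A : Set X) : Prop :=
  A.Nonempty ∧ IsClosed A ∧ ∀ g : G, g • A ⊆ A

theorem exists_minimal_isSubflow [CompactSpace X] [Nonempty X] :
    ∃ A : Set X, Minimal (IsSubflow G) A := by
  have hchains : ∀ c ⊆ {A : Set X | IsSubflow G A}, IsChain (· ⊆ ·) c → c.Nonempty →
      ∃ B ∈ {A : Set X | IsSubflow G A}, ∀ A ∈ c, B ⊆ A := by
    intro c hc hchain hne
    have : Nonempty c := hne.to_subtype
    refine ⟨⋂₀ c, ⟨?_, isClosed_sInter fun A hA => (hc hA).2.1, fun g => ?_⟩,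
      fun A => sInter_subset_of_mem⟩
    · exact IsCompact.nonempty_sInter_of_directed_nonempty_isCompact_isClosed
        (fun A hA B hB => (hchain.total hA hB).elim (fun h => ⟨A, hA, subset_rfl, h⟩)
          fun h => ⟨B, hB, h, subset_rfl⟩)
        (fun A hA => (hc hA).1) (fun A hA => (hc hA).2.1.isCompact) (fun A hA => (hc hA).2.1)
    · rintro _ ⟨x, hx, rfl⟩
      exact mem_sInter.2 fun A hA => (hc hA).2.2 g (smul_mem_smul_set (hx A hA))
  obtain ⟨A, -, hA⟩ := zorn_superset_nonempty _ hchains univ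
    ⟨univ_nonempty, isClosed_univ, fun _ => subset_univ _⟩
  exact ⟨A, hA⟩

theorem IsSubflow.inter {A B : Set X} (hA : IsSubflow G A) (hB : IsSubflow G B)
    (hAB : (A ∩ B).Nonempty) : IsSubflow G (A ∩ B) :=
  ⟨hAB, hA.2.1.inter hB.2.1, fun g =>
    smul_set_inter.trans_subset (inter_subset_inter (hA.2.2 g) (hB.2.2 g))⟩

theorem IsSubflow.smul_eq {A : Set X} (hA : IsSubflow G A) (g : G) : g • A = A :=
  (hA.2.2 g).antisymm (subset_smul_set_iff.2 (hA.2.2 g⁻¹))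

theorem isSubflow_closure_orbit [ContinuousConstSMul G X] (x : X) :
    IsSubflow G (closure (orbit G x)) :=
  ⟨(nonempty_orbit x).closure, isClosed_closure, fun g => smul_closure_orbit_subset g x⟩

theorem Minimal.closure_orbit_eq [ContinuousConstSMul G X] {A : Set X}
    (hA : Minimal (IsSubflow G) A) {x : X} (hx : x ∈ A) : closure (orbit G x) = A :=
  hA.eq_of_subset (isSubflow_closure_orbit x) <| hA.prop.2.1.closure_subset_iff.2 <|
    range_subset_iff.2 fun g => hA.prop.2.2 g (smul_mem_smul_set hx)

theorem Minimal.eq_of_inter_nonempty {A B : Set X} (hA : Minimal (IsSubflow G) A)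
    (hB : Minimal (IsSubflow G) B) (hAB : (A ∩ B).Nonempty) : A = B := by
  have hAB' := hA.prop.inter hB.prop hAB
  exact (hA.eq_of_subset hAB' inter_subset_left).symm.trans
    (hB.eq_of_subset hAB' inter_subset_right)

end Subflow

section FiniteIndex

variable {G X : Type*} [Group G] [TopologicalSpace X] [MulAction G X] [ContinuousConstSMul G X]

theorem IsProximalFlow.restrict (hX : IsProximalFlow G X) (H : Subgroup G) [H.FiniteIndex] :
    IsProximalFlow H X := by
  intro x y
  obtain ⟨z, hz⟩ := hX x y
  set R := closure (orbit H (x, y))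
  have hclosed : IsClosed (⋃ q : G ⧸ H, q.out • R) :=
    isClosed_iUnion_of_finite fun q => isClosed_closure.smul _
  have hcover : orbit G (x, y) ⊆ ⋃ q : G ⧸ H, q.out • R := by
    rintro _ ⟨g, rfl⟩
    obtain ⟨h, hh⟩ := QuotientGroup.mk_out_eq_mul H g
    refine mem_iUnion.2 ⟨g, mem_smul_set_iff_inv_smul_mem.2 (subset_closure ⟨h⁻¹, ?_⟩)⟩
    rw [hh, smul_smul, mul_inv_rev, inv_mul_cancel_right]
    rfl
  obtain ⟨q, hq⟩ := mem_iUnion.1 (hclosed.closure_subset_iff.2 hcover hz)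
  exact ⟨q.out⁻¹ • z, mem_smul_set_iff_inv_smul_mem.1 hq⟩

section Normal

variable {N : Subgroup G} [N.Normal]

theorem IsSubflow.smul_of_normal {A : Set X} (hA : IsSubflow N A) (g : G) :
    IsSubflow N (g • A) := by
  refine ⟨hA.1.smul_set, hA.2.1.smul g, fun n => ?_⟩
  rintro _ ⟨_, ⟨a, ha, rfl⟩, rfl⟩
  have hconj : g⁻¹ * n * g ∈ N := by simpa using ‹N.Normal›.conj_mem _ n.2 g⁻¹
  have := smul_mem_smul_set (a := g) (hA.2.2 ⟨_, hconj⟩ (smul_mem_smul_set ha))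
  convert this using 1
  change (n : G) • g • a = g • (g⁻¹ * n * g) • a
  simp only [smul_smul, mul_assoc, mul_inv_cancel_left]

theorem Minimal.smul_of_normal {A : Set X} (hA : Minimal (IsSubflow N) A) (g : G) :
    Minimal (IsSubflow N) (g • A) := by
  refine ⟨hA.prop.smul_of_normal g, fun B hB hBA => ?_⟩
  have := hA.2 (hB.smul_of_normal g⁻¹) (subset_smul_set_iff.1 hBA)
  exact smul_set_subset_iff_subset_inv_smul_set.2 this

/-- The `G`-translates of a minimal `N`-set form a finite family `𝒯` of pairwise disjoint closed
sets; a proximal pair cannot be spread over two of them. -/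
theorem Minimal.smul_eq_of_isProximalFlow [N.FiniteIndex] (hprox : IsProximalFlow G X)
    {M : Set X} (hM : Minimal (IsSubflow N) M) (g : G) : g • M = M := by
  set 𝒯 := range fun g : G => g • M
  have hfin : 𝒯.Finite := by
    refine (finite_range fun q : G ⧸ N => q.out • M).subset <|
      range_subset_iff.2 fun g => ⟨g, ?_⟩
    obtain ⟨n, hn⟩ := QuotientGroup.mk_out_eq_mul N g
    simp only [hn, mul_smul]
    exact congrArg (g • ·) (hM.prop.smul_eq n)
  set W := ⋃ A ∈ 𝒯, ⋃ B ∈ 𝒯 \ {A}, A ×ˢ B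
  have hW : IsClosed W := by
    refine hfin.isClosed_biUnion ?_
    rintro _ ⟨h, rfl⟩
    refine hfin.sdiff.isClosed_biUnion ?_
    rintro _ ⟨⟨h', rfl⟩, -⟩
    exact (hM.prop.2.1.smul h).prod (hM.prop.2.1.smul h')
  by_contra hne
  obtain ⟨x, hx⟩ := hM.prop.1
  obtain ⟨y, hy⟩ := (hM.smul_of_normal g).prop.1
  have horbit : orbit G (x, y) ⊆ W := by
    rintro _ ⟨h, rfl⟩
    have hdiff : (h * g) • M ≠ h • M := by
      rwa [mul_smul, Ne, smul_left_cancel_iff]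
    refine mem_biUnion ⟨h, rfl⟩ (mem_biUnion ⟨⟨h * g, rfl⟩, hdiff⟩ ⟨smul_mem_smul_set hx, ?_⟩)
    show h • y ∈ (h * g) • M
    rw [mul_smul]
    exact smul_mem_smul_set hy
  obtain ⟨z, hz⟩ := hprox x y
  have hzW := hW.closure_subset_iff.2 horbit hz
  simp only [W, mem_iUnion, mem_prod] at hzW
  obtain ⟨_, ⟨h, rfl⟩, _, ⟨⟨h', rfl⟩, hne'⟩, hzh, hzh'⟩ := hzW
  exact hne' ((hM.smul_of_normal h').eq_of_inter_nonempty (hM.smul_of_normal h) ⟨z, hzh', hzh⟩)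

end Normal

theorem IsMinimalFlow.restrict_of_normal [CompactSpace X] (hmin : IsMinimalFlow G X)
    (hprox : IsProximalFlow G X) (N : Subgroup G) [N.Normal] [N.FiniteIndex] :
    IsMinimalFlow N X := by
  intro x
  have : Nonempty X := ⟨x⟩
  obtain ⟨M, hM⟩ := exists_minimal_isSubflow (G := N) (X := X)
  obtain ⟨y, hy⟩ := hM.prop.1
  have hMuniv : M = univ := by
    refine eq_univ_of_univ_subset ?_
    rw [← (hmin y).closure_eq, hM.prop.2.1.closure_subset_iff]
    exact range_subset_iff.2 fun g =>
      hM.smul_eq_of_isProximalFlow hprox g ▸ smul_mem_smul_set hy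
  rw [dense_iff_closure_eq]
  exact (hM.closure_orbit_eq (hMuniv ▸ mem_univ x)).trans hMuniv

end FiniteIndex

theorem IsProximalFlow.of_separating {G X ι W : Type*} [Group G] [TopologicalSpace X]
    [MulAction G X] [ContinuousConstSMul G X] [CompactSpace X] [Finite ι] [TopologicalSpace W]
    [T2Space W] (e : ι → X → W) (he : ∀ i, Continuous (e i))
    (hsep : ∀ x x', (∀ i, e i x = e i x') → x = x')
    (hfib : ∀ i (g : G) x x', e i x = e i x' → e i (g • x) = e i (g • x'))
    (hprox : ∀ i x x', ∃ w, (w, w) ∈ closure (range fun g : G => (e i (g • x), e i (g • x')))) :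
    IsProximalFlow G X := by
  classical
  intro x x'
  suffices ∀ s : Finset ι, ∃ p ∈ closure (orbit G (x, x')), ∀ i ∈ s, e i p.1 = e i p.2 by
    cases nonempty_fintype ι
    obtain ⟨⟨y, y'⟩, hp, hagree⟩ := this Finset.univ
    obtain rfl : y = y' := hsep _ _ fun i => hagree i (Finset.mem_univ i)
    exact ⟨y, hp⟩
  intro s
  induction s using Finset.induction_on with
  | empty => exact ⟨(x, x'), subset_closure (mem_orbit_self _), by simp⟩
  | insert j s _ ih =>
    obtain ⟨p, hp, hps⟩ := ih
    have hclosed : IsClosed {q : X × X | ∀ i ∈ s, e i q.1 = e i q.2} := by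
      simp only [ofPred_forall]
      exact isClosed_biInter fun i _ =>
        isClosed_eq ((he i).comp continuous_fst) ((he i).comp continuous_snd)
    have hagree : closure (orbit G p) ⊆ {q | ∀ i ∈ s, e i q.1 = e i q.2} :=
      hclosed.closure_subset_iff.2 <| range_subset_iff.2 fun g i hi => hfib i g _ _ (hps i hi)
    have hsub : closure (orbit G p) ⊆ closure (orbit G (x, x')) :=
      isClosed_closure.closure_subset_iff.2 <|
        range_subset_iff.2 fun g => smul_closure_orbit_subset g _ (smul_mem_smul_set hp)
    obtain ⟨w, hw⟩ := hprox j p.1 p.2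
    have himage : closure (range fun g : G => (e j (g • p.1), e j (g • p.2))) ⊆
        Prod.map (e j) (e j) '' closure (orbit G p) :=
      closure_minimal (range_subset_iff.2 fun g => ⟨g • p, subset_closure ⟨g, rfl⟩, rfl⟩)
        (isClosed_closure.isCompact.image ((he j).prodMap (he j))).isClosed
    obtain ⟨q, hq, hqw⟩ := himage hw
    refine ⟨q, hsub hq, fun i hi => ?_⟩
    rcases Finset.mem_insert.1 hi with rfl | hi
    · exact (congrArg Prod.fst hqw).trans (congrArg Prod.snd hqw).symm
    · exact hagree hq i hi

section Coinduced

variable {G : Type*} [Group G] (S : Subgroup G) (X : Type*) [MulAction S X]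

/-- The `G`-flow coinduced from the `S`-flow `X`; `G` acts by right translation. -/
abbrev Coinduced : Type _ :=
  {φ : G → X // ∀ (s : S) (g : G), φ (s * g) = s • φ g}

theorem QuotientGroup.mul_out_inv_mem (g : G) : g * ((g⁻¹ : G) : G ⧸ S).out ∈ S := by
  obtain ⟨s, hs⟩ := QuotientGroup.mk_out_eq_mul S g⁻¹
  rw [hs, mul_inv_cancel_left]
  exact s.2

namespace Coinduced

variable {S X}

instance : MulAction G (Coinduced S X) where
  smul g φ := ⟨fun h => φ.1 (h * g), fun s h => by simpa only [mul_assoc] using φ.2 s (h * g)⟩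
  one_smul φ := Subtype.ext <| funext fun h => congrArg φ.1 (mul_one h)
  mul_smul g g' φ := Subtype.ext <| funext fun h => congrArg φ.1 (mul_assoc h g g').symm

theorem smul_apply (g : G) (φ : Coinduced S X) (h : G) : (g • φ).1 h = φ.1 (h * g) := rfl

theorem smul_apply_one (s : S) (φ : Coinduced S X) : ((s : G) • φ).1 1 = s • φ.1 1 := by
  rw [smul_apply, one_mul, ← φ.2, mul_one]

theorem apply_eq_smul_apply_out_inv (φ : Coinduced S X) (g : G) :
    φ.1 g = (⟨_, QuotientGroup.mul_out_inv_mem S g⟩ : S) • φ.1 ((g⁻¹ : G) : G ⧸ S).out⁻¹ := by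
  rw [← φ.2, mul_inv_cancel_right]

theorem ext_of_apply_out_inv {φ ψ : Coinduced S X}
    (h : ∀ q : G ⧸ S, φ.1 q.out⁻¹ = ψ.1 q.out⁻¹) : φ = ψ :=
  Subtype.ext <| funext fun g => by
    rw [apply_eq_smul_apply_out_inv φ, apply_eq_smul_apply_out_inv ψ, h]

instance [Nonempty X] : Nonempty (Coinduced S X) := by
  obtain ⟨x⟩ := ‹Nonempty X›
  refine ⟨⟨fun g => (⟨_, QuotientGroup.mul_out_inv_mem S g⟩ : S) • x, fun s g => ?_⟩⟩
  have hq : ((((s : G) * g)⁻¹ : G) : G ⧸ S) = ((g⁻¹ : G) : G ⧸ S) := by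
    rw [mul_inv_rev, QuotientGroup.mk_mul_of_mem _ (S.inv_mem s.2)]
  dsimp only
  rw [← mul_smul]
  congr 1
  exact Subtype.ext (by simp only [Subgroup.coe_mul, hq, mul_assoc])

theorem apply_mul_eq_smul (φ : Coinduced S X) {t n : G} (h : t * n * t⁻¹ ∈ S) :
    φ.1 (t * n) = (⟨_, h⟩ : S) • φ.1 t := by
  rw [← φ.2, inv_mul_cancel_right]

variable [TopologicalSpace X]

theorem continuous_apply (g : G) : Continuous fun φ : Coinduced S X => φ.1 g :=
  (_root_.continuous_apply g).comp continuous_subtype_val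

instance : ContinuousConstSMul G (Coinduced S X) :=
  ⟨fun g => (continuous_pi fun h => continuous_apply (h * g)).subtype_mk _⟩

instance [ContinuousConstSMul S X] [CompactSpace X] [T2Space X] :
    CompactSpace (Coinduced S X) := by
  have hclosed : IsClosed {φ : G → X | ∀ (s : S) (g : G), φ (s * g) = s • φ g} := by
    simp only [ofPred_forall]
    exact isClosed_iInter fun s => isClosed_iInter fun g =>
      isClosed_eq (_root_.continuous_apply _) ((_root_.continuous_apply g).const_smul s)
  exact isCompact_iff_compactSpace.1 hclosed.isCompact

theorem exists_embedding_fin [S.FiniteIndex] :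
    ∃ (n : ℕ) (r : Coinduced S X → Fin n → X), Continuous r ∧ Function.Injective r := by
  let e := Finite.equivFin (G ⧸ S)
  refine ⟨_, fun φ i => φ.1 (e.symm i).out⁻¹, continuous_pi fun i => continuous_apply _,
    fun φ ψ h => ext_of_apply_out_inv fun q => ?_⟩
  simpa using congrFun h (e q)

theorem isProximalFlow [S.FiniteIndex] [ContinuousConstSMul S X] [CompactSpace X] [T2Space X]
    (hX : IsProximalFlow S X) : IsProximalFlow G (Coinduced S X) := by
  refine IsProximalFlow.of_subgroup (H := S.normalCore) <| IsProximalFlow.of_separating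
    (fun (q : G ⧸ S) (φ : Coinduced S X) => φ.1 q.out⁻¹) (fun q => continuous_apply _)
    (fun φ ψ h => ext_of_apply_out_inv h) (fun q n φ ψ h => ?_) (fun q φ ψ => ?_)
  · have hconj := S.normalCore_le (S.normalCore_normal.conj_mem _ n.2 q.out⁻¹)
    show φ.1 (_ * n) = ψ.1 (_ * n)
    rw [apply_mul_eq_smul φ hconj, apply_mul_eq_smul ψ hconj, h]
  · obtain ⟨w, hw⟩ := hX.restrict (S.normalCore.subgroupOf S) (φ.1 q.out⁻¹) (ψ.1 q.out⁻¹)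
    refine ⟨w, closure_mono (range_subset_iff.2 fun k => ?_) hw⟩
    have hk : q.out * (k : G) * q.out⁻¹ ∈ S.normalCore :=
      S.normalCore_normal.conj_mem _ (Subgroup.mem_subgroupOf.1 k.2) _
    refine ⟨⟨_, hk⟩, ?_⟩
    show (φ.1 (_ * _), ψ.1 (_ * _)) = _
    rw [show q.out⁻¹ * (q.out * (k : G) * q.out⁻¹) = k * q.out⁻¹ by group, φ.2, ψ.2]
    rfl

theorem continuousSMul [TopologicalSpace G] [ContinuousMul G] [ContinuousSMul S X]
    (hS : IsOpen (S : Set G)) : ContinuousSMul G (Coinduced S X) := by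
  classical
  refine ⟨Continuous.subtype_mk (continuous_pi fun h₀ => ?_) _⟩
  refine continuous_iff_continuousAt.2 fun ⟨g₀, φ₀⟩ => ?_
  -- near `g₀`, `h₀ * g` lies in the open coset `S * (h₀ * g₀)`
  let σ : G → G := fun g => h₀ * g * (h₀ * g₀)⁻¹
  have hσ : Continuous σ := (continuous_const.mul continuous_id).mul continuous_const
  have hσg₀ : σ g₀ = 1 := mul_inv_cancel _
  let ι : G → S := fun g => if hg : g ∈ S then ⟨g, hg⟩ else 1
  have hι : ContinuousAt ι 1 := by
    rw [Topology.IsInducing.subtypeVal.continuousAt_iff]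
    refine continuousAt_id.congr ?_
    filter_upwards [hS.mem_nhds S.one_mem] with g hg
    simp only [ι, Function.comp, dif_pos (SetLike.mem_coe.1 hg), id]
  have hlocal : (fun p : G × Coinduced S X => ι (σ p.1) • p.2.1 (h₀ * g₀)) =ᶠ[𝓝 (g₀, φ₀)]
      fun p => p.2.1 (h₀ * p.1) := by
    have hmem : σ ⁻¹' S ∈ 𝓝 g₀ := (hS.preimage hσ).mem_nhds (by simp [hσg₀, S.one_mem])
    filter_upwards [prod_mem_nhds hmem Filter.univ_mem] with p hp
    have hpS : h₀ * p.1 * (h₀ * g₀)⁻¹ ∈ S := hp.1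
    dsimp only [ι]
    rw [dif_pos hpS, ← p.2.2]
    simp only [σ, inv_mul_cancel_right]
  refine ContinuousAt.congr ?_ hlocal
  exact (ContinuousAt.comp (x := (g₀, φ₀)) (hι.comp_of_eq hσ.continuousAt hσg₀)
    continuousAt_fst).smul ((continuous_apply _).comp continuous_snd).continuousAt

end Coinduced

end Coinduced

section SubMulAction

variable {G X : Type*} [Group G] [TopologicalSpace X] [MulAction G X]

instance SubMulAction.continuousSMul [TopologicalSpace G] [ContinuousSMul G X]
    (p : SubMulAction G X) : ContinuousSMul G p :=
  ⟨(continuous_fst.smul (continuous_subtype_val.comp continuous_snd)).subtype_mk _⟩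

theorem IsProximalFlow.subMulAction (hX : IsProximalFlow G X) (p : SubMulAction G X)
    (hp : IsClosed (p : Set X)) : IsProximalFlow G p := by
  intro a b
  obtain ⟨z, hz⟩ := hX a b
  have hemb : IsClosedEmbedding (Prod.map (Subtype.val : p → X) Subtype.val) :=
    hp.isClosedEmbedding_subtypeVal.prodMap hp.isClosedEmbedding_subtypeVal
  rw [show (range fun g : G => (g • a.1, g • b.1)) =
      Prod.map Subtype.val Subtype.val '' range fun g : G => (g • a, g • b) by
    rw [← range_comp]; rfl] at hz
  obtain ⟨⟨c, d⟩, hcd, hcdz⟩ := (hemb.closure_image_eq _).le hz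
  obtain rfl : c = d :=
    Subtype.ext ((congrArg Prod.fst hcdz).trans (congrArg Prod.snd hcdz).symm)
  exact ⟨c, hcd⟩

theorem exists_isMinimalFlow_subMulAction [CompactSpace X] [Nonempty X]
    [ContinuousConstSMul G X] :
    ∃ p : SubMulAction G X, IsClosed (p : Set X) ∧ IsMinimalFlow G p := by
  obtain ⟨M, hM⟩ := exists_minimal_isSubflow (G := G) (X := X)
  refine ⟨⟨M, fun g _ hx => hM.prop.2.2 g (smul_mem_smul_set hx)⟩, hM.prop.2.1, fun m => ?_⟩
  refine fun y => closure_subtype.2 ?_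
  rw [← range_comp]
  exact (hM.closure_orbit_eq m.2).symm ▸ y.2

end SubMulAction

section Universal

variable (G : Type*) [Group G] [TopologicalSpace G]

/-- The universal property of `Π(G)`, for flows in the universe of `X`. -/
def MapsOntoMinimalProximal (X : Type v) [TopologicalSpace X] [MulAction G X] : Prop :=
  ∀ (Y : Type v) [TopologicalSpace Y] [CompactSpace Y] [T2Space Y] [MulAction G Y]
    [ContinuousSMul G Y], IsMinimalFlow G Y → IsProximalFlow G Y →
    ∃ f : X → Y, Continuous f ∧ Function.Surjective f ∧ ∀ (g : G) (x : X), f (g • x) = g • f x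

variable {G} {Z : Type v} [TopologicalSpace Z] [MulAction G Z]

theorem MapsOntoMinimalProximal.nonempty (hZ : MapsOntoMinimalProximal G Z) : Nonempty Z := by
  have : ContinuousSMul G PUnit.{v + 1} := ⟨continuous_const⟩
  obtain ⟨f, -, hf, -⟩ := hZ PUnit
    (fun x => by rw [(range_nonempty _).eq_univ]; exact dense_univ)
    fun x _ => ⟨x, subset_closure ⟨1, Subsingleton.elim _ _⟩⟩
  exact ⟨(hf PUnit.unit).choose⟩

/-- `Z` only maps onto flows of its own universe; the embedding `r` transports `Y` there. -/
theorem MapsOntoMinimalProximal.exists_equivariant_of_isMinimalFlow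
    (hZ : MapsOntoMinimalProximal G Z) {Y : Type*} [TopologicalSpace Y] [CompactSpace Y]
    [MulAction G Y] [ContinuousSMul G Y] (hmin : IsMinimalFlow G Y) (hprox : IsProximalFlow G Y)
    {W : Type v} [TopologicalSpace W] [T2Space W] {r : Y → W} (hr : Continuous r)
    (hinj : Function.Injective r) :
    ∃ f : Z → Y, Continuous f ∧ ∀ (g : G) (z : Z), f (g • z) = g • f z := by
  let e : Y ≃ₜ range r := Continuous.homeoOfEquivCompactToT2 (f := Equiv.ofInjective r hinj)
    (hr.subtype_mk _)
  let _ : MulAction G (range r) := e.symm.toEquiv.mulAction G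
  have : ContinuousSMul G (range r) :=
    ⟨e.continuous.comp (continuous_fst.smul (e.symm.continuous.comp continuous_snd))⟩
  have : CompactSpace (range r) := isCompact_iff_compactSpace.1 (isCompact_range hr)
  have he : ∀ (g : G) y, e (g • y) = g • e y := fun g y => by
    simp [Equiv.smul_def]
  obtain ⟨F, hF, -, hFeq⟩ := hZ (range r) (hmin.of_surjective e.continuous e.surjective he)
    (hprox.of_surjective e.continuous e.surjective he)
  refine ⟨e.symm ∘ F, e.symm.continuous.comp hF, fun g z => ?_⟩
  simp [hFeq, Equiv.smul_def]

theorem MapsOntoMinimalProximal.exists_equivariant_of_isProximalFlow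
    (hZ : MapsOntoMinimalProximal G Z) {Y : Type*} [TopologicalSpace Y] [CompactSpace Y]
    [Nonempty Y] [MulAction G Y] [ContinuousSMul G Y] (hprox : IsProximalFlow G Y)
    {W : Type v} [TopologicalSpace W] [T2Space W] {r : Y → W} (hr : Continuous r)
    (hinj : Function.Injective r) :
    ∃ f : Z → Y, Continuous f ∧ ∀ (g : G) (z : Z), f (g • z) = g • f z := by
  obtain ⟨p, hp, hpmin⟩ := exists_isMinimalFlow_subMulAction (G := G) (X := Y)
  have : CompactSpace p := isCompact_iff_compactSpace.1 hp.isCompact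
  obtain ⟨f, hf, hfeq⟩ := hZ.exists_equivariant_of_isMinimalFlow hpmin
    (hprox.subMulAction p hp) (hr.comp continuous_subtype_val) (hinj.comp Subtype.val_injective)
  exact ⟨Subtype.val ∘ f, continuous_subtype_val.comp hf,
    fun g z => congrArg Subtype.val (hfeq g z)⟩

theorem MapsOntoMinimalProximal.exists_equivariant_to_subgroup [ContinuousMul G]
    (hZ : MapsOntoMinimalProximal G Z) {S : Subgroup G} [S.FiniteIndex]
    (hS : IsOpen (S : Set G)) {X : Type v} [TopologicalSpace X] [CompactSpace X] [T2Space X]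
    [Nonempty X] [MulAction S X] [ContinuousSMul S X] (hX : IsProximalFlow S X) :
    ∃ h : Z → X, Continuous h ∧ ∀ (s : S) (z : Z), h ((s : G) • z) = s • h z := by
  have := Coinduced.continuousSMul (X := X) hS
  obtain ⟨n, r, hr, hinj⟩ := Coinduced.exists_embedding_fin (S := S) (X := X)
  obtain ⟨F, hF, hFeq⟩ :=
    hZ.exists_equivariant_of_isProximalFlow (Coinduced.isProximalFlow hX) hr hinj
  refine ⟨fun z => (F z).1 1, (Coinduced.continuous_apply 1).comp hF, fun s z => ?_⟩
  show (F ((s : G) • z)).1 1 = _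
  rw [hFeq]
  exact Coinduced.smul_apply_one s (F z)

end Universal

theorem exists_extension_of_homeomorph {G : Type*} [Group G] [TopologicalSpace G]
    {S : Subgroup G} {X Z : Type*} [TopologicalSpace X] [MulAction S X] [TopologicalSpace Z]
    [MulAction G Z] [ContinuousSMul G Z] (φ : X ≃ₜ Z)
    (hφ : ∀ (s : S) (x : X), φ (s • x) = (s : G) • φ x) :
    ∃ ρ : G → (X ≃ₜ X),
      (∀ g h : G, ρ (g * h) = (ρ h).trans (ρ g)) ∧ ρ 1 = Homeomorph.refl X ∧
      Continuous (fun p : G × X => ρ p.1 p.2) ∧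
      (∀ (s : S) (x : X), ρ (s : G) x = s • x) ∧
      (∃ φ : X ≃ₜ Z, ∀ (g : G) (x : X), φ (ρ g x) = g • φ x) ∧
      ((∀ g : G, g ≠ 1 → ∀ z : Z, g • z ≠ z) ↔
        (∀ g : G, g ≠ 1 → ∀ x : X, ρ g x ≠ x)) := by
  let ρ : G → (X ≃ₜ X) := fun g => (φ.trans (Homeomorph.smul g)).trans φ.symm
  have hρ : ∀ g x, ρ g x = φ.symm (g • φ x) := fun _ _ => rfl
  have hfix : ∀ g x, ρ g x = x ↔ g • φ x = φ x := fun g x => by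
    rw [hρ, φ.symm_apply_eq]
  refine ⟨ρ, fun g h => ?_, ?_, ?_, fun s x => ?_, ⟨φ, fun g x => ?_⟩, ?_⟩
  · ext x
    simp [hρ, mul_smul]
  · ext x
    simp [hρ]
  · exact φ.symm.continuous.comp (continuous_fst.smul (φ.continuous.comp continuous_snd))
  · rw [hρ, ← hφ, φ.symm_apply_apply]
  · rw [hρ, φ.apply_symm_apply]
  · simp only [ne_eq, hfix, φ.surjective.forall]

theorem furstenberg_isomorphism
    (G : Type u) [Group G] [TopologicalSpace G] [IsTopologicalGroup G]
    (S : Subgroup G) (hS : IsClosed (S : Set G)) [S.FiniteIndex]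
    -- X = Π(S) : the universal minimal proximal flow of S
    (X : Type v) [TopologicalSpace X] [CompactSpace X] [T2Space X]
    [MulAction S X] [ContinuousSMul S X]
    (hXmin : IsMinimalFlow S X) (hXprox : IsProximalFlow S X)
    (hXuniv : ∀ (Y : Type v) [TopologicalSpace Y] [CompactSpace Y] [T2Space Y]
      [MulAction S Y] [ContinuousSMul S Y], IsMinimalFlow S Y → IsProximalFlow S Y →
      ∃ f : X → Y, Continuous f ∧ Function.Surjective f ∧
        ∀ (s : S) (x : X), f (s • x) = s • f x)
    -- Z = Π(G) : the universal minimal proximal flow of G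
    (Z : Type v) [TopologicalSpace Z] [CompactSpace Z] [T2Space Z]
    [MulAction G Z] [ContinuousSMul G Z]
    (hZmin : IsMinimalFlow G Z) (hZprox : IsProximalFlow G Z)
    (hZuniv : ∀ (Y : Type v) [TopologicalSpace Y] [CompactSpace Y] [T2Space Y]
      [MulAction G Y] [ContinuousSMul G Y], IsMinimalFlow G Y → IsProximalFlow G Y →
      ∃ f : Z → Y, Continuous f ∧ Function.Surjective f ∧
        ∀ (g : G) (z : Z), f (g • z) = g • f z) :
    -- the S-action on Π(S) extends to a jointly continuous G-action, isomorphic to (G, Π(G));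
    -- moreover (G, Π(G)) is free iff the extended flow (G, Π(S)) is free
    ∃ ρ : G → (X ≃ₜ X),
      (∀ g h : G, ρ (g * h) = (ρ h).trans (ρ g)) ∧ ρ 1 = Homeomorph.refl X ∧
      Continuous (fun p : G × X => ρ p.1 p.2) ∧
      (∀ (s : S) (x : X), ρ (s : G) x = s • x) ∧
      (∃ φ : X ≃ₜ Z, ∀ (g : G) (x : X), φ (ρ g x) = g • φ x) ∧
      ((∀ g : G, g ≠ 1 → ∀ z : Z, g • z ≠ z) ↔ (∀ g : G, g ≠ 1 → ∀ x : X, ρ g x ≠ x)) := by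
  have hZSmin : IsMinimalFlow S Z :=
    (hZmin.restrict_of_normal hZprox S.normalCore).of_le S.normalCore_le
  have hZSprox : IsProximalFlow S Z := hZprox.restrict S
  have : Nonempty X := MapsOntoMinimalProximal.nonempty hXuniv
  obtain ⟨f, hf, -, hfeq⟩ := hXuniv Z hZSmin hZSprox
  obtain ⟨h, hh, hheq⟩ := MapsOntoMinimalProximal.exists_equivariant_to_subgroup hZuniv
    (S.isOpen_of_isClosed_of_finiteIndex hS) hXprox
  have hfh : f ∘ h = id := hZSprox.eq_of_equivariant hZSmin (hf.comp hh) continuous_id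
    (fun s z => by simp only [Function.comp, Subgroup.smul_def, hheq, hfeq]) fun _ _ => rfl
  have hhf : h ∘ f = id := hXprox.eq_of_equivariant hXmin (hh.comp hf) continuous_id
    (fun s x => by simp only [Function.comp, hfeq, Subgroup.smul_def, hheq]) fun _ _ => rfl
  exact exists_extension_of_homeomorph ⟨⟨f, h, congrFun hhf, congrFun hfh⟩, hf, hh⟩ hfeq
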